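/- Fix an integer k ≥ 1, a real h ≥ 1, and a real κ with 0 < κ < 1, and set x := 2(1−κ^2)/κ^2. Let L_k(κ,h) be the (k+3)×(k+3) real symmetric matrix given in block form by L_k(κ,h) = [[A, B], [Bᵀ, C]], where A is the 2×2 matrix [[1,1],[1,2]], B is the 2×(k+1) matrix whose first row is (1,1,…,1) and whose second row is (2,1,…,1), and C is the (k+1)×(k+1) matrix with (1,1) entry 2/κ^2 and (i,j) entry 1/((i+j−2)h+1) + 1 for (i,j) ≠ (1,1) (1-based indices). Then L_k(κ,h) is positive semidefinite if and only if the generalized Hilbert matrix A_k(x,h) is positive semidefinite. -/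

import Mathlib

/-- The generalized Hilbert matrix `A_k(x,h)`: a `(k+1) × (k+1)` real matrix whose
`(i,j)` entry (0-based) is `x` if `i = j = 0` and `1/((i+j)h+1)` otherwise. -/
noncomputable def genHilbert (k : ℕ) (x h : ℝ) : Matrix (Fin (k + 1)) (Fin (k + 1)) ℝ :=
  fun i j =>
    if i = 0 ∧ j = 0 then x
    else 1 / ((((i : ℕ) : ℝ) + ((j : ℕ) : ℝ)) * h + 1)

/-- The `(k+3) × (k+3)` matrix `L_k(κ,h)`, given in block form by `[[A, B], [Bᵀ, C]]`,
where `A = [[1,1],[1,2]]`, `B` is the `2 × (k+1)` matrix with first row `(1,…,1)` and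
second row `(2,1,…,1)`, and `C` is the `(k+1) × (k+1)` matrix whose `(1,1)` entry
(1-based) is `2/κ²` and whose `(i,j)` entry for `(i,j) ≠ (1,1)` is `1/((i+j−2)h+1) + 1`.
Indices of `L_k` below are 0-based: the block `C` occupies indices `≥ 2`. -/
noncomputable def Lmat (k : ℕ) (κ h : ℝ) : Matrix (Fin (k + 3)) (Fin (k + 3)) ℝ :=
  fun i j =>
    if (i : ℕ) < 2 then
      if (j : ℕ) < 2 then (if (i : ℕ) = 1 ∧ (j : ℕ) = 1 then 2 else 1)
      else (if (i : ℕ) = 1 ∧ (j : ℕ) = 2 then 2 else 1)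
    else
      if (j : ℕ) < 2 then (if (j : ℕ) = 1 ∧ (i : ℕ) = 2 then 2 else 1)
      else if (i : ℕ) = 2 ∧ (j : ℕ) = 2 then 2 / κ ^ 2
      else 1 / (((((i : ℕ) - 2) + ((j : ℕ) - 2) : ℕ) : ℝ) * h + 1) + 1

/-!
After reordering the indices as `Fin 2 ⊕ Fin (k + 1)`, `L_k(κ,h)` is the block matrix
`[[A, B], [Bᵀ, C]]` with `A = [[1,1],[1,2]]` positive definite, so it is positive semidefinite
iff the Schur complement `C - Bᵀ A⁻¹ B` is. Since `Bᵀ A⁻¹ B` is the all-ones matrix plus `1` in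
the corner, the Schur complement is the generalized Hilbert matrix with corner
`2/κ² - 2 = 2(1-κ²)/κ²`.
-/

open Matrix

namespace Lmat

noncomputable def blockA : Matrix (Fin 2) (Fin 2) ℝ := !![1, 1; 1, 2]

def blockB (k : ℕ) : Matrix (Fin 2) (Fin (k + 1)) ℝ :=
  of fun p j => if p = 1 ∧ j = 0 then 2 else 1

noncomputable def blockC (k : ℕ) (κ h : ℝ) : Matrix (Fin (k + 1)) (Fin (k + 1)) ℝ :=
  of fun i j => if i = 0 ∧ j = 0 then 2 / κ ^ 2
    else 1 / ((((i : ℕ) : ℝ) + ((j : ℕ) : ℝ)) * h + 1) + 1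

theorem blockA_eq_conjTranspose_mul_self :
    blockA = (!![1, 1; 0, 1] : Matrix (Fin 2) (Fin 2) ℝ)ᴴ * !![1, 1; 0, 1] := by
  ext i j
  fin_cases i <;> fin_cases j <;> simp [blockA, mul_apply, one_add_one_eq_two]

theorem blockA_posDef : blockA.PosDef := by
  rw [blockA_eq_conjTranspose_mul_self]
  exact .conjTranspose_mul_self _ <| mulVec_injective_of_det_ne_zero (by simp [det_fin_two])

theorem blockA_inv : blockA⁻¹ = !![2, -1; -1, 1] := by
  refine inv_eq_right_inv ?_
  rw [blockA, mul_fin_two, one_fin_two]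
  norm_num

theorem blockB_conjTranspose_mul_inv_mul (k : ℕ) :
    (blockB k)ᴴ * blockA⁻¹ * blockB k = of fun i j => if i = 0 ∧ j = 0 then 2 else 1 := by
  ext i j
  rw [blockA_inv]
  by_cases hi : i = 0 <;> by_cases hj : j = 0 <;>
    simp [blockB, mul_apply, Fin.sum_univ_two, hi, hj] <;> norm_num

theorem blockC_sub_eq_genHilbert (k : ℕ) (κ h : ℝ) :
    blockC k κ h - (blockB k)ᴴ * blockA⁻¹ * blockB k = genHilbert k (2 / κ ^ 2 - 2) h := by
  ext i j
  rw [blockB_conjTranspose_mul_inv_mul]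
  by_cases hij : i = 0 ∧ j = 0 <;> simp [blockC, genHilbert, hij]

def indexEquiv (k : ℕ) : Fin 2 ⊕ Fin (k + 1) ≃ Fin (k + 3) :=
  finSumFinEquiv.trans (finCongr (by omega))

@[simp]
theorem val_indexEquiv_inl (k : ℕ) (p : Fin 2) : (indexEquiv k (.inl p) : ℕ) = p := rfl

@[simp]
theorem val_indexEquiv_inr (k : ℕ) (q : Fin (k + 1)) :
    (indexEquiv k (.inr q) : ℕ) = q + 2 :=
  Nat.add_comm _ _

theorem submatrix_indexEquiv (k : ℕ) (κ h : ℝ) :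
    (Lmat k κ h).submatrix (indexEquiv k) (indexEquiv k) =
      fromBlocks blockA (blockB k) (blockB k)ᴴ (blockC k κ h) := by
  ext (p | q) (p' | q')
  · fin_cases p <;> fin_cases p' <;> simp [Lmat, blockA]
  · fin_cases p <;> simp [Lmat, blockB]
  · fin_cases p' <;> simp [Lmat, blockB]
  · simp [Lmat, blockC]

end Lmat

theorem Lmat_posSemidef_iff_genHilbert_posSemidef_general
    (k : ℕ) (h : ℝ)
    (κ : ℝ) (hκ0 : 0 < κ)
    (x : ℝ) (hx : x = 2 * (1 - κ ^ 2) / κ ^ 2) :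
    (Lmat k κ h).PosSemidef ↔ (genHilbert k x h).PosSemidef := by
  have hx' : x = 2 / κ ^ 2 - 2 := by
    rw [hx]; field_simp
  have : Invertible Lmat.blockA := Lmat.blockA_posDef.isUnit.invertible
  rw [← posSemidef_submatrix_equiv (Lmat.indexEquiv k), Lmat.submatrix_indexEquiv,
    PosDef.fromBlocks₁₁ _ _ Lmat.blockA_posDef, Lmat.blockC_sub_eq_genHilbert, hx']

theorem Lmat_posSemidef_iff_genHilbert_posSemidef
    (k : ℕ) (hk : 1 ≤ k) (h : ℝ) (hh : 1 ≤ h)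
    (κ : ℝ) (hκ0 : 0 < κ) (hκ1 : κ < 1)
    (x : ℝ) (hx : x = 2 * (1 - κ ^ 2) / κ ^ 2) :
    (Lmat k κ h).PosSemidef ↔ (genHilbert k x h).PosSemidef :=
  Lmat_posSemidef_iff_genHilbert_posSemidef_general k h κ hκ0 x hx
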